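/- Let Γ be a discrete subgroup of SL(2,ℝ), let n ≥ 1, and let g₁, g₂ ∈ Γ with tr g₁ > 2 and tr g₂ > 2 and with nonzero lower-left entries. Suppose gᵢ = hᵢⁿ or gᵢ = −hᵢⁿ (i = 1, 2) for primitive hyperbolic elements h₁, h₂ ∈ Γ, where h ∈ Γ is primitive if there are no k ∈ Γ and m ≥ 2 with h = kᵐ or h = −kᵐ. If w_a(g₁) = w_a(g₂) and w_r(g₁) = w_r(g₂), then g₁ = g₂. -/

import Mathlib

noncomputable section

abbrev SL2 := Matrix.SpecialLinearGroup (Fin 2) ℝ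

/-- The matrix topology on `SL(2,ℝ)`, induced from the space of `2×2` real matrices. -/
instance : TopologicalSpace SL2 :=
  TopologicalSpace.induced (fun g => (g : Matrix (Fin 2) (Fin 2) ℝ)) inferInstance

/-- Trace of an element of `SL(2,ℝ)`. -/
def trc (g : SL2) : ℝ := g.1 0 0 + g.1 1 1

/-- `λ₊(g) = (tr g + √((tr g)² − 4))/2`. -/
def lamP (g : SL2) : ℝ := (trc g + Real.sqrt ((trc g) ^ 2 - 4)) / 2

/-- `λ₋(g) = (tr g − √((tr g)² − 4))/2`. -/
def lamM (g : SL2) : ℝ := (trc g - Real.sqrt ((trc g) ^ 2 - 4)) / 2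

/-- Attracting fixed point `w_a(g) = (λ₊(g) − d)/c` of a hyperbolic `g` with `c ≠ 0`. -/
def wA (g : SL2) : ℝ := (lamP g - g.1 1 1) / g.1 1 0

/-- Repelling fixed point `w_r(g) = (λ₋(g) − d)/c` of a hyperbolic `g` with `c ≠ 0`. -/
def wR (g : SL2) : ℝ := (lamM g - g.1 1 1) / g.1 1 0

/-- `h` is primitive in `Γ` if there are no `k ∈ Γ` and `m ≥ 2` with `h = kᵐ` or `h = −kᵐ`. -/
def IsPrimitiveIn (Γ : Subgroup SL2) (h : SL2) : Prop :=
  ¬∃ k ∈ Γ, ∃ m : ℕ, 2 ≤ m ∧ (h = k ^ m ∨ h = -(k ^ m))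

/-!
The common fixed points `w ≠ v` of `g₁` and `g₂` single out the group `D` of elements of
`SL(2,ℝ)` having `(w, 1)` and `(v, 1)` as eigenvectors. `D` is a conjugate of the diagonal group,
so an element of `D` is determined by its eigenvalue `λ` at `(w, 1)`, and depends continuously on
it. Each `hᵢ` commutes with `gᵢ`, hence lies in `D`. Discreteness of `Γ` makes `log |λ|` take
its values on `Γ ∩ D` in a cyclic group `ℤ a`, and primitivity forces `log |λ(hᵢ)| = ± a`, since
otherwise `hᵢ = ± zᵏ` with `|k| ≠ 1` for the element `z` with `log |λ(z)| = a`. So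
`λ(gᵢ) = exp (n |a|)` for both `i`, and `g₁ = g₂`.
-/

open Matrix Topology

def eigenvalueAt (x : SL2) (w : ℝ) : ℝ := x 1 0 * w + x 1 1

/-- `(w, 1)` is an eigenvector of `x` with eigenvalue `eigenvalueAt x w`; equivalently, the Möbius
transformation of `x` fixes `w`. -/
def fixSubgroup (w : ℝ) : Subgroup SL2 where
  carrier := {x | x 0 0 * w + x 0 1 = eigenvalueAt x w * w}
  one_mem' := by simp [eigenvalueAt]
  mul_mem' {x y} hx hy := by
    simp only [Fin.isValue, eigenvalueAt, Set.mem_ofPred_eq, Matrix.SpecialLinearGroup.coe_mul,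
      mul_apply, Fin.sum_univ_two] at *
    linear_combination x 0 0 * hy + (y 1 0 * w + y 1 1) * hx - x 1 0 * w * hy
  inv_mem' {x} hx := by
    simp only [Fin.isValue, eigenvalueAt, Set.mem_ofPred_eq, Matrix.SpecialLinearGroup.coe_inv,
      adjugate_fin_two, of_apply, cons_val', cons_val_zero, cons_val_one, cons_val_fin_one] at *
    linear_combination -hx

theorem mem_fixSubgroup {w : ℝ} {x : SL2} :
    x ∈ fixSubgroup w ↔ x 0 0 * w + x 0 1 = eigenvalueAt x w * w :=
  Iff.rfl

section FixSubgroup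

variable {w : ℝ} {x y : SL2}

@[simp]
theorem eigenvalueAt_one : eigenvalueAt 1 w = 1 := by
  simp [eigenvalueAt]

@[simp]
theorem eigenvalueAt_neg : eigenvalueAt (-x) w = -eigenvalueAt x w := by
  simp only [Fin.isValue, eigenvalueAt, Matrix.SpecialLinearGroup.coe_neg, Matrix.neg_apply]
  ring

theorem neg_one_mem_fixSubgroup : (-1 : SL2) ∈ fixSubgroup w := by
  simp [mem_fixSubgroup, eigenvalueAt]

theorem eigenvalueAt_mul (hy : y ∈ fixSubgroup w) :
    eigenvalueAt (x * y) w = eigenvalueAt x w * eigenvalueAt y w := by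
  rw [mem_fixSubgroup, eigenvalueAt] at hy
  simp only [Fin.isValue, eigenvalueAt, Matrix.SpecialLinearGroup.coe_mul, mul_apply,
    Fin.sum_univ_two]
  linear_combination x 1 0 * hy

theorem eigenvalueAt_inv_mul (hx : x ∈ fixSubgroup w) :
    eigenvalueAt x⁻¹ w * eigenvalueAt x w = 1 := by
  rw [← eigenvalueAt_mul hx, inv_mul_cancel, eigenvalueAt_one]

theorem eigenvalueAt_inv (hx : x ∈ fixSubgroup w) :
    eigenvalueAt x⁻¹ w = (eigenvalueAt x w)⁻¹ :=
  eq_inv_of_mul_eq_one_left (eigenvalueAt_inv_mul hx)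

theorem eigenvalueAt_ne_zero (hx : x ∈ fixSubgroup w) : eigenvalueAt x w ≠ 0 :=
  right_ne_zero_of_mul_eq_one (eigenvalueAt_inv_mul hx)

theorem mem_fixSubgroup_of_commute {g : SL2} (hg : g ∈ fixSubgroup w) (hc : g 1 0 ≠ 0)
    (hgx : Commute g x) : x ∈ fixSubgroup w := by
  have hM := congrArg (fun A : SL2 => (A : Matrix (Fin 2) (Fin 2) ℝ)) hgx.eq
  have E10 := congrFun (congrFun hM 1) 0
  have E11 := congrFun (congrFun hM 1) 1
  simp only [Fin.isValue, Matrix.SpecialLinearGroup.coe_mul, mul_apply, Fin.sum_univ_two]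
    at E10 E11
  rw [mem_fixSubgroup, eigenvalueAt] at hg ⊢
  refine mul_left_cancel₀ hc ?_
  linear_combination w * E10 + E11 + x 1 0 * hg

theorem mem_fixSubgroup_of_sq_eq {g : SL2} {l : ℝ} (hc : g 1 0 ≠ 0)
    (hl : l ^ 2 = trc g * l - 1) :
    g ∈ fixSubgroup ((l - g 1 1) / g 1 0) ∧ eigenvalueAt g ((l - g 1 1) / g 1 0) = l := by
  have hdet : g 0 0 * g 1 1 - g 0 1 * g 1 0 = 1 := by
    rw [← det_fin_two]; exact g.2
  have hev : eigenvalueAt g ((l - g 1 1) / g 1 0) = l := by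
    rw [eigenvalueAt]; field_simp; ring
  refine ⟨?_, hev⟩
  rw [mem_fixSubgroup, hev]
  rw [trc] at hl
  field_simp
  linear_combination -hl - hdet

end FixSubgroup

def axisSubgroup (w v : ℝ) : Subgroup SL2 := fixSubgroup w ⊓ fixSubgroup v

def eigenbasis (w v : ℝ) : Matrix (Fin 2) (Fin 2) ℝ := !![w, v; 1, 1]

def torusMatrix (w v l : ℝ) : Matrix (Fin 2) (Fin 2) ℝ :=
  eigenbasis w v * diagonal ![l, l⁻¹] * (eigenbasis w v)⁻¹

section AxisSubgroup

variable {w v : ℝ} {x y : SL2}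

theorem isUnit_det_eigenbasis (hwv : w ≠ v) : IsUnit (eigenbasis w v).det := by
  simpa [eigenbasis, det_fin_two, sub_eq_zero] using hwv

theorem coe_eq_torusMatrix (hwv : w ≠ v) (hx : x ∈ axisSubgroup w v) :
    (x : Matrix (Fin 2) (Fin 2) ℝ) = torusMatrix w v (eigenvalueAt x w) := by
  obtain ⟨hxw, hxv⟩ := Subgroup.mem_inf.mp hx
  rw [mem_fixSubgroup, eigenvalueAt] at hxw hxv
  have hconj : (x : Matrix (Fin 2) (Fin 2) ℝ) * eigenbasis w v
      = eigenbasis w v * diagonal ![eigenvalueAt x w, eigenvalueAt x v] := by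
    ext i j
    fin_cases i <;> fin_cases j <;> simp [eigenbasis, mul_apply, eigenvalueAt] <;> linarith
  have hprod : eigenvalueAt x w * eigenvalueAt x v = 1 := by
    have hdet := congrArg det hconj
    simp only [det_mul, x.2, one_mul, det_diagonal, Fin.prod_univ_two, cons_val_zero,
      cons_val_one, cons_val_fin_one] at hdet
    exact (isUnit_det_eigenbasis hwv).mul_left_cancel (hdet.symm.trans (mul_one _).symm)
  rw [torusMatrix, ← eq_inv_of_mul_eq_one_right hprod, ← hconj,
    mul_nonsing_inv_cancel_right _ _ (isUnit_det_eigenbasis hwv)]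

theorem torusMatrix_one (hwv : w ≠ v) : torusMatrix w v 1 = 1 := by
  have h1 : ![(1 : ℝ), 1⁻¹] = fun _ => 1 := by
    ext i; fin_cases i <;> simp
  rw [torusMatrix, h1, diagonal_one, mul_one, mul_nonsing_inv _ (isUnit_det_eigenbasis hwv)]

theorem continuousAt_torusMatrix : ContinuousAt (torusMatrix w v) 1 := by
  unfold torusMatrix
  fun_prop (disch := norm_num)

theorem eq_of_eigenvalueAt_eq (hwv : w ≠ v) (hx : x ∈ axisSubgroup w v)
    (hy : y ∈ axisSubgroup w v) (h : eigenvalueAt x w = eigenvalueAt y w) : x = y :=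
  Subtype.ext <| by rw [coe_eq_torusMatrix hwv hx, coe_eq_torusMatrix hwv hy, h]

end AxisSubgroup

def logModulus (x : SL2) (w : ℝ) : ℝ := Real.log |eigenvalueAt x w|

section LogModulus

variable {w v : ℝ} {x y : SL2}

theorem exp_logModulus (hx : x ∈ fixSubgroup w) :
    Real.exp (logModulus x w) = |eigenvalueAt x w| :=
  Real.exp_log (abs_pos.mpr (eigenvalueAt_ne_zero hx))

@[simp]
theorem logModulus_neg : logModulus (-x) w = logModulus x w := by
  simp [logModulus]

theorem logModulus_mul (hx : x ∈ fixSubgroup w) (hy : y ∈ fixSubgroup w) :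
    logModulus (x * y) w = logModulus x w + logModulus y w := by
  rw [logModulus, eigenvalueAt_mul hy, abs_mul,
    Real.log_mul (abs_ne_zero.mpr (eigenvalueAt_ne_zero hx))
      (abs_ne_zero.mpr (eigenvalueAt_ne_zero hy)), logModulus, logModulus]

theorem logModulus_inv (hx : x ∈ fixSubgroup w) : logModulus x⁻¹ w = -logModulus x w := by
  rw [logModulus, eigenvalueAt_inv hx, abs_inv, Real.log_inv, logModulus]

theorem logModulus_zpow (hx : x ∈ fixSubgroup w) (k : ℤ) :
    logModulus (x ^ k) w = k * logModulus x w := by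
  induction k using Int.induction_on with
  | zero => simp [logModulus]
  | succ k ih =>
    rw [_root_.zpow_add_one, logModulus_mul (zpow_mem hx k) hx, ih]
    push_cast; ring
  | pred k ih =>
    rw [_root_.zpow_sub_one, logModulus_mul (zpow_mem hx _) (inv_mem hx), ih, logModulus_inv hx]
    push_cast; ring

theorem logModulus_pow (hx : x ∈ fixSubgroup w) (n : ℕ) :
    logModulus (x ^ n) w = n * logModulus x w := by
  simpa using logModulus_zpow hx n

theorem eq_one_or_eq_neg_one_of_logModulus_eq_zero (hwv : w ≠ v) (hx : x ∈ axisSubgroup w v)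
    (h : logModulus x w = 0) : x = 1 ∨ x = -1 := by
  rw [logModulus, Real.log_abs, Real.log_eq_zero] at h
  obtain h | h | h := h
  · exact absurd h (eigenvalueAt_ne_zero hx.1)
  · exact .inl <| eq_of_eigenvalueAt_eq hwv hx (one_mem _) (by simpa using h)
  · exact .inr <| eq_of_eigenvalueAt_eq hwv hx
      ⟨neg_one_mem_fixSubgroup, neg_one_mem_fixSubgroup⟩ (by simpa using h)

def logModuli (Γ : Subgroup SL2) (w v : ℝ) : AddSubgroup ℝ where
  carrier := (logModulus · w) '' (Γ ⊓ axisSubgroup w v : Subgroup SL2)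
  zero_mem' := ⟨1, one_mem _, by simp [logModulus]⟩
  add_mem' := by
    rintro _ _ ⟨x, hx, rfl⟩ ⟨y, hy, rfl⟩
    exact ⟨x * y, mul_mem hx hy, logModulus_mul hx.2.1 hy.2.1⟩
  neg_mem' := by
    rintro _ ⟨x, hx, rfl⟩
    exact ⟨x⁻¹, inv_mem hx, logModulus_inv hx.2.1⟩

theorem mem_logModuli {Γ : Subgroup SL2} {t : ℝ} :
    t ∈ logModuli Γ w v ↔ ∃ x ∈ Γ ⊓ axisSubgroup w v, logModulus x w = t :=
  Iff.rfl

end LogModulus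

theorem exists_mem_nhds_one_forall_eq_one (Γ : Subgroup SL2) [DiscreteTopology Γ] :
    ∃ U ∈ 𝓝 (1 : Matrix (Fin 2) (Fin 2) ℝ),
      ∀ x ∈ Γ, (x : Matrix (Fin 2) (Fin 2) ℝ) ∈ U → x = 1 := by
  have h1 : ({1} : Set Γ) ∈ 𝓝 (1 : Γ) := by simp [nhds_discrete]
  rw [nhds_subtype, Filter.mem_comap] at h1
  obtain ⟨S, hS, hSsub⟩ := h1
  rw [nhds_induced, Filter.mem_comap] at hS
  obtain ⟨U, hU, hUsub⟩ := hS
  refine ⟨U, by simpa using hU, fun x hx hxU => ?_⟩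
  simpa using @hSsub ⟨x, hx⟩ (hUsub hxU)

theorem eigenvalueAt_mul_self {w : ℝ} {x : SL2} (hx : x ∈ fixSubgroup w) :
    eigenvalueAt (x * x) w = Real.exp (2 * logModulus x w) := by
  rw [eigenvalueAt_mul hx, ← abs_mul_abs_self, ← exp_logModulus hx, ← Real.exp_add, two_mul]

theorem exists_logModuli_eq_closure (Γ : Subgroup SL2) [DiscreteTopology Γ] {w v : ℝ}
    (hwv : w ≠ v) : ∃ a, logModuli Γ w v = AddSubgroup.closure {a} := by
  obtain ⟨U, hU, hΓU⟩ := exists_mem_nhds_one_forall_eq_one Γ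
  have hcont : ContinuousAt (fun t => torusMatrix w v (Real.exp (2 * t))) 0 :=
    continuousAt_torusMatrix.comp_of_eq (by fun_prop) (by simp)
  have hpre : {t | torusMatrix w v (Real.exp (2 * t)) ∈ U} ∈ 𝓝 0 :=
    hcont.preimage_mem_nhds (by simpa [torusMatrix_one hwv] using hU)
  obtain ⟨l, u, ⟨hl, hu⟩, hlu⟩ := mem_nhds_iff_exists_Ioo_subset.mp hpre
  refine AddSubgroup.cyclic_of_isolated_zero hu (Set.disjoint_left.mpr ?_)
  rintro _ ⟨x, hx, rfl⟩ ⟨hpos, hlt⟩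
  -- `x * x` rather than `x`: the eigenvalue of `x` itself may be negative.
  have hsq : x * x = 1 := hΓU _ (mul_mem hx.1 hx.1) <| by
    rw [coe_eq_torusMatrix hwv (mul_mem hx.2 hx.2), eigenvalueAt_mul_self hx.2.1]
    exact hlu ⟨hl.trans hpos, hlt⟩
  have := logModulus_mul hx.2.1 hx.2.1
  rw [hsq, logModulus, eigenvalueAt_one, abs_one, Real.log_one] at this
  linarith

theorem IsPrimitiveIn.natAbs_eq_one {Γ : Subgroup SL2} {h z : SL2} (hprim : IsPrimitiveIn Γ h)
    (hz : z ∈ Γ) {k : ℤ} (hk : h = z ^ k ∨ h = -(z ^ k)) : k.natAbs = 1 := by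
  obtain ⟨y, hy, hpow⟩ : ∃ y ∈ Γ, h = y ^ k.natAbs ∨ h = -(y ^ k.natAbs) := by
    obtain ⟨m, rfl | rfl⟩ := Int.eq_nat_or_neg k
    · exact ⟨z, hz, by simpa using hk⟩
    · exact ⟨z⁻¹, inv_mem hz, by simpa [inv_pow] using hk⟩
  by_contra hne
  rcases Nat.lt_or_ge k.natAbs 2 with hlt | hge
  · rw [show k.natAbs = 0 by omega, pow_zero] at hpow
    -- `±1 = ±1 ^ 2` is not primitive either.
    exact hprim ⟨1, one_mem Γ, 2, le_rfl, by simpa using hpow⟩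
  · exact hprim ⟨y, hy, _, hge, hpow⟩

theorem abs_logModulus_eq_of_isPrimitiveIn {Γ : Subgroup SL2} {w v a : ℝ} {h : SL2}
    (hwv : w ≠ v) (hA : logModuli Γ w v = AddSubgroup.closure {a})
    (hhΓ : h ∈ Γ) (hh : h ∈ axisSubgroup w v) (hprim : IsPrimitiveIn Γ h) :
    |logModulus h w| = |a| := by
  obtain ⟨z, hz, hza⟩ := mem_logModuli.mp (hA ▸ AddSubgroup.mem_closure_singleton_self a)
  obtain ⟨k, hk⟩ :=
    AddSubgroup.mem_closure_singleton.mp (hA ▸ mem_logModuli.mpr ⟨h, ⟨hhΓ, hh⟩, rfl⟩)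
  have hzk : z ^ k ∈ axisSubgroup w v := zpow_mem (Subgroup.mem_inf.mp hz).2 k
  have hquot : logModulus (h * (z ^ k)⁻¹) w = 0 := by
    rw [logModulus_mul hh.1 (inv_mem hzk.1), logModulus_inv hzk.1, logModulus_zpow hz.2.1, hza,
      ← hk, zsmul_eq_mul, add_neg_cancel]
  have hpow : h = z ^ k ∨ h = -(z ^ k) :=
    (eq_one_or_eq_neg_one_of_logModulus_eq_zero hwv (mul_mem hh (inv_mem hzk)) hquot).imp
      mul_inv_eq_one.mp fun h1 => by rw [mul_inv_eq_iff_eq_mul.mp h1, neg_one_mul]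
  have hk1 : |(k : ℝ)| = 1 := by
    rw [← Int.cast_abs, Int.abs_eq_natAbs, hprim.natAbs_eq_one hz.1 hpow, Nat.cast_one,
      Int.cast_one]
  rw [← hk, zsmul_eq_mul, abs_mul, hk1, one_mul]

theorem eigenvalueAt_eq_exp_of_isPrimitiveIn {Γ : Subgroup SL2} {w v a : ℝ} {g h : SL2} {n : ℕ}
    (hwv : w ≠ v) (hA : logModuli Γ w v = AddSubgroup.closure {a})
    (hg : g ∈ axisSubgroup w v) (hc : g 1 0 ≠ 0) (hg1 : 1 < eigenvalueAt g w)
    (hhΓ : h ∈ Γ) (hprim : IsPrimitiveIn Γ h) (hpow : g = h ^ n ∨ g = -(h ^ n)) :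
    eigenvalueAt g w = Real.exp (n * |a|) := by
  have hcomm : Commute g h := by
    rcases hpow with rfl | rfl
    exacts [(Commute.refl h).pow_left n, ((Commute.refl h).pow_left n).neg_left]
  have hh : h ∈ axisSubgroup w v :=
    ⟨mem_fixSubgroup_of_commute hg.1 hc hcomm, mem_fixSubgroup_of_commute hg.2 hc hcomm⟩
  have hlog : logModulus g w = n * logModulus h w := by
    rcases hpow with rfl | rfl <;> simp [logModulus_pow hh.1]
  have hpos : 0 < logModulus g w := Real.log_pos (lt_of_lt_of_le hg1 (le_abs_self _))
  rw [← abs_of_pos (zero_lt_one.trans hg1), ← exp_logModulus hg.1, ← abs_of_pos hpos, hlog,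
    abs_mul, Nat.abs_cast, abs_logModulus_eq_of_isPrimitiveIn hwv hA hhΓ hh hprim]

section FixedPoints

variable {g : SL2}

theorem lamP_sq (h4 : 4 ≤ trc g ^ 2) : lamP g ^ 2 = trc g * lamP g - 1 := by
  have := Real.sq_sqrt (sub_nonneg.mpr h4)
  unfold lamP
  linear_combination this / 4

theorem lamM_sq (h4 : 4 ≤ trc g ^ 2) : lamM g ^ 2 = trc g * lamM g - 1 := by
  have := Real.sq_sqrt (sub_nonneg.mpr h4)
  unfold lamM
  linear_combination this / 4

theorem lamM_lt_lamP (h4 : 4 < trc g ^ 2) : lamM g < lamP g := by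
  have := Real.sqrt_pos.mpr (sub_pos.mpr h4)
  unfold lamP lamM
  linarith

theorem one_lt_lamP (htr : 2 < trc g) : 1 < lamP g := by
  have := Real.sqrt_nonneg (trc g ^ 2 - 4)
  unfold lamP
  linarith

theorem four_lt_trc_sq (htr : 2 < trc g) : 4 < trc g ^ 2 := by
  nlinarith

theorem mem_fixSubgroup_wA (htr : 2 < trc g) (hc : g 1 0 ≠ 0) :
    g ∈ fixSubgroup (wA g) ∧ eigenvalueAt g (wA g) = lamP g :=
  mem_fixSubgroup_of_sq_eq hc (lamP_sq (four_lt_trc_sq htr).le)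

theorem mem_fixSubgroup_wR (htr : 2 < trc g) (hc : g 1 0 ≠ 0) :
    g ∈ fixSubgroup (wR g) ∧ eigenvalueAt g (wR g) = lamM g :=
  mem_fixSubgroup_of_sq_eq hc (lamM_sq (four_lt_trc_sq htr).le)

theorem mem_axisSubgroup_wA_wR (htr : 2 < trc g) (hc : g 1 0 ≠ 0) :
    g ∈ axisSubgroup (wA g) (wR g) :=
  ⟨(mem_fixSubgroup_wA htr hc).1, (mem_fixSubgroup_wR htr hc).1⟩

theorem wA_ne_wR (htr : 2 < trc g) (hc : g 1 0 ≠ 0) : wA g ≠ wR g := by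
  intro h
  have hev := (mem_fixSubgroup_wA htr hc).2
  rw [h, (mem_fixSubgroup_wR htr hc).2] at hev
  exact (lamM_lt_lamP (four_lt_trc_sq htr)).ne hev

theorem one_lt_eigenvalueAt_wA (htr : 2 < trc g) (hc : g 1 0 ≠ 0) : 1 < eigenvalueAt g (wA g) :=
  (mem_fixSubgroup_wA htr hc).2 ▸ one_lt_lamP htr

end FixedPoints

theorem stmt_8_general (Γ : Subgroup SL2) (hΓ : DiscreteTopology Γ) (n : ℕ)
    (g₁ g₂ h₁ h₂ : SL2)
    (htr₁ : trc g₁ > 2) (htr₂ : trc g₂ > 2)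
    (hc₁ : g₁.1 1 0 ≠ 0) (hc₂ : g₂.1 1 0 ≠ 0)
    (hh₁ : h₁ ∈ Γ) (hh₂ : h₂ ∈ Γ)
    (hprim₁ : IsPrimitiveIn Γ h₁) (hprim₂ : IsPrimitiveIn Γ h₂)
    (hpow₁ : g₁ = h₁ ^ n ∨ g₁ = -(h₁ ^ n)) (hpow₂ : g₂ = h₂ ^ n ∨ g₂ = -(h₂ ^ n))
    (ha : wA g₁ = wA g₂) (hr : wR g₁ = wR g₂) :
    g₁ = g₂ := by
  have hwv := wA_ne_wR htr₁ hc₁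
  obtain ⟨a, hA⟩ := exists_logModuli_eq_closure Γ hwv
  have hg₁ := mem_axisSubgroup_wA_wR htr₁ hc₁
  have hg₂ : g₂ ∈ axisSubgroup (wA g₁) (wR g₁) := ha ▸ hr ▸ mem_axisSubgroup_wA_wR htr₂ hc₂
  refine eq_of_eigenvalueAt_eq hwv hg₁ hg₂ ?_
  rw [eigenvalueAt_eq_exp_of_isPrimitiveIn hwv hA hg₁ hc₁ (one_lt_eigenvalueAt_wA htr₁ hc₁)
      hh₁ hprim₁ hpow₁,
    eigenvalueAt_eq_exp_of_isPrimitiveIn hwv hA hg₂ hc₂ (ha ▸ one_lt_eigenvalueAt_wA htr₂ hc₂)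
      hh₂ hprim₂ hpow₂]

/-- in a discrete subgroup `Γ ≤ SL(2,ℝ)`, two hyperbolic elements
`g₁, g₂` (with `tr > 2`, nonzero lower-left entries) of the same level `n ≥ 1`
(i.e. `gᵢ = ±hᵢⁿ` with `hᵢ` primitive hyperbolic) having the same attracting and
repelling fixed points are equal. -/
theorem stmt_8 (Γ : Subgroup SL2) (hΓ : DiscreteTopology Γ) (n : ℕ) (hn : 1 ≤ n)
    (g₁ g₂ h₁ h₂ : SL2) (hg₁ : g₁ ∈ Γ) (hg₂ : g₂ ∈ Γ)
    (htr₁ : trc g₁ > 2) (htr₂ : trc g₂ > 2)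
    (hc₁ : g₁.1 1 0 ≠ 0) (hc₂ : g₂.1 1 0 ≠ 0)
    (hh₁ : h₁ ∈ Γ) (hh₂ : h₂ ∈ Γ)
    (hhyp₁ : |trc h₁| > 2) (hhyp₂ : |trc h₂| > 2)
    (hprim₁ : IsPrimitiveIn Γ h₁) (hprim₂ : IsPrimitiveIn Γ h₂)
    (hpow₁ : g₁ = h₁ ^ n ∨ g₁ = -(h₁ ^ n)) (hpow₂ : g₂ = h₂ ^ n ∨ g₂ = -(h₂ ^ n))
    (ha : wA g₁ = wA g₂) (hr : wR g₁ = wR g₂) :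
    g₁ = g₂ :=
  stmt_8_general Γ hΓ n g₁ g₂ h₁ h₂ htr₁ htr₂ hc₁ hc₂ hh₁ hh₂ hprim₁ hprim₂ hpow₁ hpow₂ ha hr
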